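/- arXiv:math/0409357 — 6 statements merged into one kernel-verified Lean document; each statement's English description precedes it below -/
import Mathlib

section
/- The rational quaternion algebra B_6 = (−6, 2 / ℚ), i.e. the quaternion algebra ℍ[ℚ, −6, 2] with basis 1, i, j, k satisfying i² = −6, j² = 2, ij = −ji = k, is a division ring (every nonzero element is invertible). -/
/-!
The reduced norm of `x = r + a i + b j + c k` in `ℍ[ℚ, -6, 2]` is
`r² + 6a² - 2b² - 12c²`, and `x` is invertible (with inverse `x̄ / N(x)`) as soon as this norm
is nonzero. The norm form is anisotropic over `ℚ` by a `3`-adic descent: after clearing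
denominators, reducing an integral zero modulo `3` twice shows that all four coordinates are
divisible by `3`, and dividing by `3` gives another integral zero, so every coordinate is
divisible by every power of `3`.
-/

open Quaternion

namespace QuaternionAlgebra

variable {K : Type*} [Field K] {c₁ c₂ c₃ : K}

theorem isUnit_of_re_star_mul_ne_zero {a : ℍ[K,c₁,c₂,c₃]} (h : (star a * a).re ≠ 0) :
    IsUnit a := by
  set n := (star a * a).re
  have hl : (n⁻¹ • star a) * a = 1 := by
    rw [smul_mul_assoc, star_mul_eq_coe, smul_coe, inv_mul_cancel₀ h, coe_one]
  have hr : a * (n⁻¹ • star a) = 1 := by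
    rw [mul_smul_comm, ← star_comm_self', ← smul_mul_assoc, hl]
  exact isUnit_iff_exists.mpr ⟨_, hr, hl⟩

end QuaternionAlgebra

def normB6 {R : Type*} [CommRing R] (x y z w : R) : R :=
  x ^ 2 + 6 * y ^ 2 - 2 * z ^ 2 - 12 * w ^ 2

theorem normB6_mul {R : Type*} [CommRing R] (d x y z w : R) :
    normB6 (d * x) (d * y) (d * z) (d * w) = d ^ 2 * normB6 x y z w := by
  unfold normB6
  ring

@[simp, norm_cast]
theorem Int.cast_normB6 {R : Type*} [CommRing R] (x y z w : ℤ) :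
    ((normB6 x y z w : ℤ) : R) = normB6 (x : R) y z w := by
  simp [normB6]

theorem QuaternionAlgebra.re_star_mul_self_eq_normB6 (a : ℍ[ℚ,-6,2]) :
    (star a * a).re = normB6 a.re a.imI a.imJ a.imK := by
  simp only [re_mul, re_star, imI_star, imJ_star, imK_star, normB6]
  ring

theorem ZMod.eq_zero_of_sq_eq_two_mul_sq :
    ∀ a b : ZMod 3, a ^ 2 = 2 * b ^ 2 → a = 0 ∧ b = 0 := by
  decide

namespace Int

theorem three_dvd_of_three_dvd_sq_sub_two_mul_sq (x y : ℤ) (h : 3 ∣ x ^ 2 - 2 * y ^ 2) :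
    3 ∣ x ∧ 3 ∣ y := by
  have three_dvd_iff (v : ℤ) : 3 ∣ v ↔ (v : ZMod 3) = 0 :=
    (ZMod.intCast_zmod_eq_zero_iff_dvd v 3).symm
  rw [three_dvd_iff] at h
  push_cast at h
  rw [three_dvd_iff, three_dvd_iff]
  exact ZMod.eq_zero_of_sq_eq_two_mul_sq _ _ (sub_eq_zero.mp h)

variable {x y z w : ℤ}

theorem three_dvd_of_normB6_eq_zero (h : normB6 x y z w = 0) :
    3 ∣ x ∧ 3 ∣ y ∧ 3 ∣ z ∧ 3 ∣ w := by
  unfold normB6 at h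
  obtain ⟨⟨x', rfl⟩, ⟨z', rfl⟩⟩ := three_dvd_of_three_dvd_sq_sub_two_mul_sq x z
    ⟨4 * w ^ 2 - 2 * y ^ 2, by linarith⟩
  obtain ⟨hw, hy⟩ := three_dvd_of_three_dvd_sq_sub_two_mul_sq w y
    ⟨x' ^ 2 - 2 * z' ^ 2 - w ^ 2, by linarith⟩
  exact ⟨dvd_mul_right 3 x', hy, dvd_mul_right 3 z', hw⟩

theorem pow_three_dvd_of_normB6_eq_zero (n : ℕ) (h : normB6 x y z w = 0) :
    3 ^ n ∣ x ∧ 3 ^ n ∣ y ∧ 3 ^ n ∣ z ∧ 3 ^ n ∣ w := by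
  induction n generalizing x y z w with
  | zero => simp
  | succ n ih =>
    obtain ⟨⟨x', rfl⟩, ⟨y', rfl⟩, ⟨z', rfl⟩, ⟨w', rfl⟩⟩ :=
      three_dvd_of_normB6_eq_zero h
    have h' : normB6 x' y' z' w' = 0 := by unfold normB6 at h ⊢; linarith
    obtain ⟨hx, hy, hz, hw⟩ := ih h'
    simp only [pow_succ']
    exact ⟨mul_dvd_mul_left 3 hx, mul_dvd_mul_left 3 hy, mul_dvd_mul_left 3 hz,
      mul_dvd_mul_left 3 hw⟩

theorem eq_zero_of_normB6_eq_zero (h : normB6 x y z w = 0) :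
    x = 0 ∧ y = 0 ∧ z = 0 ∧ w = 0 := by
  have eq_zero {v : ℤ} (hv : ∀ n : ℕ, 3 ^ n ∣ v) : v = 0 := by
    by_contra hne
    exact FiniteMultiplicity.not_iff_forall.mpr hv (finiteMultiplicity_iff.mpr ⟨by decide, hne⟩)
  exact ⟨eq_zero fun n => (pow_three_dvd_of_normB6_eq_zero n h).1,
    eq_zero fun n => (pow_three_dvd_of_normB6_eq_zero n h).2.1,
    eq_zero fun n => (pow_three_dvd_of_normB6_eq_zero n h).2.2.1,
    eq_zero fun n => (pow_three_dvd_of_normB6_eq_zero n h).2.2.2⟩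

end Int

namespace Rat

theorem exists_intCast_eq_mul_of_den_dvd {q : ℚ} {d : ℕ} (h : q.den ∣ d) :
    ∃ m : ℤ, (m : ℚ) = d * q := by
  obtain ⟨k, rfl⟩ := h
  exact ⟨q.num * k, by push_cast; rw [← mul_den_eq_num]; ring⟩

theorem eq_zero_of_normB6_eq_zero {x y z w : ℚ} (h : normB6 x y z w = 0) :
    x = 0 ∧ y = 0 ∧ z = 0 ∧ w = 0 := by
  set d := x.den * y.den * z.den * w.den
  obtain ⟨X, hX⟩ := exists_intCast_eq_mul_of_den_dvd (q := x) (d := d)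
    ⟨y.den * z.den * w.den, by ring⟩
  obtain ⟨Y, hY⟩ := exists_intCast_eq_mul_of_den_dvd (q := y) (d := d)
    ⟨x.den * z.den * w.den, by ring⟩
  obtain ⟨Z, hZ⟩ := exists_intCast_eq_mul_of_den_dvd (q := z) (d := d)
    ⟨x.den * y.den * w.den, by ring⟩
  obtain ⟨W, hW⟩ := exists_intCast_eq_mul_of_den_dvd (q := w) (d := d)
    ⟨x.den * y.den * z.den, by ring⟩
  have hInt : normB6 X Y Z W = 0 := by
    have : ((normB6 X Y Z W : ℤ) : ℚ) = 0 := by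
      rw [Int.cast_normB6, hX, hY, hZ, hW, normB6_mul, h, mul_zero]
    exact_mod_cast this
  have hd : (d : ℚ) ≠ 0 := by positivity
  have eq_zero_of_intCast_eq {q : ℚ} {m : ℤ} (hm : (m : ℚ) = d * q) (hm0 : m = 0) : q = 0 := by
    rw [hm0, Int.cast_zero, eq_comm, mul_eq_zero] at hm
    exact hm.resolve_left hd
  obtain ⟨hX0, hY0, hZ0, hW0⟩ := Int.eq_zero_of_normB6_eq_zero hInt
  exact ⟨eq_zero_of_intCast_eq hX hX0, eq_zero_of_intCast_eq hY hY0,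
    eq_zero_of_intCast_eq hZ hZ0, eq_zero_of_intCast_eq hW hW0⟩

end Rat

/-- The rational quaternion algebra `B₆ = (−6, 2 / ℚ)` is a division ring:
every nonzero element is invertible. -/
theorem stmt_0 : ∀ x : ℍ[ℚ, -6, 2], x ≠ 0 → ∃ y : ℍ[ℚ, -6, 2], x * y = 1 ∧ y * x = 1 := by
  intro x hx
  refine isUnit_iff_exists.mp (QuaternionAlgebra.isUnit_of_re_star_mul_ne_zero ?_)
  rw [QuaternionAlgebra.re_star_mul_self_eq_normB6]
  intro h
  obtain ⟨hre, hi, hj, hk⟩ := Rat.eq_zero_of_normB6_eq_zero h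
  exact hx (QuaternionAlgebra.ext hre hi hj hk)
end

section
/- The norm form of the quaternion algebra (−6, 2 / ℚ) is anisotropic over ℚ: if t, x, y, z are rational numbers with t² + 6x² − 2y² − 12z² = 0, then t = x = y = z = 0. -/
lemma zmod3_sq_add_sq (a b : ZMod 3) (h : a ^ 2 + b ^ 2 = 0) : a = 0 ∧ b = 0 := by
  revert h; revert a b; decide

lemma int_aniso : ∀ n : ℕ, ∀ t x y z : ℤ,
    t.natAbs + x.natAbs + y.natAbs + z.natAbs = n →
    t ^ 2 + 6 * x ^ 2 - 2 * y ^ 2 - 12 * z ^ 2 = 0 →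
    t = 0 ∧ x = 0 ∧ y = 0 ∧ z = 0 := by
  intro n
  induction n using Nat.strong_induction_on with
  | _ n ih =>
    intro t x y z hn h
    by_cases h0 : t = 0 ∧ x = 0 ∧ y = 0 ∧ z = 0
    · exact h0
    have hch : (3 : ZMod 3) = 0 := by decide
    -- step 1: 3 ∣ t and 3 ∣ y
    have hc1 : ((t : ZMod 3)) ^ 2 + ((y : ZMod 3)) ^ 2 = 0 := by
      have h3 : ((t : ZMod 3)) ^ 2 + 6 * (x : ZMod 3) ^ 2 - 2 * (y : ZMod 3) ^ 2
          - 12 * (z : ZMod 3) ^ 2 = 0 := by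
        have := congrArg (Int.cast : ℤ → ZMod 3) h
        push_cast at this
        exact this
      linear_combination h3 + (-2 * (x : ZMod 3) ^ 2 + (y : ZMod 3) ^ 2
        + 4 * (z : ZMod 3) ^ 2) * hch
    obtain ⟨ht0, hy0⟩ := zmod3_sq_add_sq _ _ hc1
    obtain ⟨t₁, rfl⟩ := (ZMod.intCast_zmod_eq_zero_iff_dvd t 3).mp ht0
    obtain ⟨y₁, rfl⟩ := (ZMod.intCast_zmod_eq_zero_iff_dvd y 3).mp hy0
    have h2 : 3 * t₁ ^ 2 + 2 * x ^ 2 - 6 * y₁ ^ 2 - 4 * z ^ 2 = 0 := by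
      have h2' : 3 * (3 * t₁ ^ 2 + 2 * x ^ 2 - 6 * y₁ ^ 2 - 4 * z ^ 2) = 0 := by
        linear_combination h
      exact (mul_eq_zero.mp h2').resolve_left (by norm_num)
    -- step 2: 3 ∣ x and 3 ∣ z
    have hc2 : ((x : ZMod 3)) ^ 2 + ((z : ZMod 3)) ^ 2 = 0 := by
      have h3 : 3 * (t₁ : ZMod 3) ^ 2 + 2 * (x : ZMod 3) ^ 2 - 6 * (y₁ : ZMod 3) ^ 2
          - 4 * (z : ZMod 3) ^ 2 = 0 := by
        have := congrArg (Int.cast : ℤ → ZMod 3) h2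
        push_cast at this
        exact this
      linear_combination 2 * h3 + (-2 * (t₁ : ZMod 3) ^ 2 - (x : ZMod 3) ^ 2
        + 4 * (y₁ : ZMod 3) ^ 2 + 3 * (z : ZMod 3) ^ 2) * hch
    obtain ⟨hx0, hz0⟩ := zmod3_sq_add_sq _ _ hc2
    obtain ⟨x₁, rfl⟩ := (ZMod.intCast_zmod_eq_zero_iff_dvd x 3).mp hx0
    obtain ⟨z₁, rfl⟩ := (ZMod.intCast_zmod_eq_zero_iff_dvd z 3).mp hz0
    have heq : t₁ ^ 2 + 6 * x₁ ^ 2 - 2 * y₁ ^ 2 - 12 * z₁ ^ 2 = 0 := by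
      have h2' : 3 * (t₁ ^ 2 + 6 * x₁ ^ 2 - 2 * y₁ ^ 2 - 12 * z₁ ^ 2) = 0 := by
        linear_combination h2
      exact (mul_eq_zero.mp h2').resolve_left (by norm_num)
    set m := t₁.natAbs + x₁.natAbs + y₁.natAbs + z₁.natAbs with hm
    have hn3 : n = 3 * m := by
      simp only [Int.natAbs_mul, Int.natAbs_natCast] at hn
      omega
    have hmpos : 0 < m := by
      rcases Nat.eq_zero_or_pos m with h' | h'
      · exfalso
        apply h0
        have : t₁.natAbs = 0 ∧ x₁.natAbs = 0 ∧ y₁.natAbs = 0 ∧ z₁.natAbs = 0 := by omega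
        refine ⟨?_, ?_, ?_, ?_⟩ <;>
          simp [Int.natAbs_eq_zero.mp this.1, Int.natAbs_eq_zero.mp this.2.1,
            Int.natAbs_eq_zero.mp this.2.2.1, Int.natAbs_eq_zero.mp this.2.2.2]
      · exact h'
    have hlt : m < n := by omega
    obtain ⟨a, b, c, d⟩ := ih m hlt t₁ x₁ y₁ z₁ rfl heq
    exact ⟨by rw [a]; ring, by rw [b]; ring, by rw [c]; ring, by rw [d]; ring⟩

/-- The norm form of the quaternion algebra `(−6, 2 / ℚ)` is anisotropic over `ℚ`. -/
theorem stmt_1 (t x y z : ℚ) (h : t ^ 2 + 6 * x ^ 2 - 2 * y ^ 2 - 12 * z ^ 2 = 0) :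
    t = 0 ∧ x = 0 ∧ y = 0 ∧ z = 0 := by
  have hdt : ((t.den : ℚ)) ≠ 0 := by exact_mod_cast t.den_ne_zero
  have hdx : ((x.den : ℚ)) ≠ 0 := by exact_mod_cast x.den_ne_zero
  have hdy : ((y.den : ℚ)) ≠ 0 := by exact_mod_cast y.den_ne_zero
  have hdz : ((z.den : ℚ)) ≠ 0 := by exact_mod_cast z.den_ne_zero
  have ht : (t.num : ℚ) = t * t.den := (Rat.mul_den_eq_num t).symm
  have hx : (x.num : ℚ) = x * x.den := (Rat.mul_den_eq_num x).symm
  have hy : (y.num : ℚ) = y * y.den := (Rat.mul_den_eq_num y).symm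
  have hz : (z.num : ℚ) = z * z.den := (Rat.mul_den_eq_num z).symm
  set T : ℤ := t.num * x.den * y.den * z.den with hT
  set X : ℤ := x.num * t.den * y.den * z.den with hX
  set Y : ℤ := y.num * t.den * x.den * z.den with hY
  set Z : ℤ := z.num * t.den * x.den * y.den with hZ
  have H : (T : ℚ) ^ 2 + 6 * (X : ℚ) ^ 2 - 2 * (Y : ℚ) ^ 2 - 12 * (Z : ℚ) ^ 2 = 0 := by
    push_cast [hT, hX, hY, hZ]
    rw [ht, hx, hy, hz]
    linear_combination ((t.den : ℚ) * x.den * y.den * z.den) ^ 2 * h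
  have HZ : T ^ 2 + 6 * X ^ 2 - 2 * Y ^ 2 - 12 * Z ^ 2 = 0 := by exact_mod_cast H
  obtain ⟨a, b, c, d⟩ := int_aniso _ T X Y Z rfl HZ
  have hdt' : (t.den : ℤ) ≠ 0 := by exact_mod_cast t.den_ne_zero
  have hdx' : (x.den : ℤ) ≠ 0 := by exact_mod_cast x.den_ne_zero
  have hdy' : (y.den : ℤ) ≠ 0 := by exact_mod_cast y.den_ne_zero
  have hdz' : (z.den : ℤ) ≠ 0 := by exact_mod_cast z.den_ne_zero
  refine ⟨?_, ?_, ?_, ?_⟩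
  · have : t.num = 0 := by
      have := a
      rw [hT] at this
      simpa [mul_eq_zero, hdx', hdy', hdz'] using this
    exact Rat.num_eq_zero.mp this
  · have : x.num = 0 := by
      have := b
      rw [hX] at this
      simpa [mul_eq_zero, hdt', hdy', hdz'] using this
    exact Rat.num_eq_zero.mp this
  · have : y.num = 0 := by
      have := c
      rw [hY] at this
      simpa [mul_eq_zero, hdt', hdx', hdz'] using this
    exact Rat.num_eq_zero.mp this
  · have : z.num = 0 := by
      have := d
      rw [hZ] at this
      simpa [mul_eq_zero, hdt', hdx', hdy'] using this
    exact Rat.num_eq_zero.mp this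
end

section
/- The rational quaternion algebra (−6, 3 / ℚ), i.e. the quaternion algebra ℍ[ℚ, −6, 3] with i² = −6, j² = 3, ij = −ji, is a division ring. -/
/-!
The reduced norm of `x = a + b i + c j + d k` in `ℍ[ℚ, -6, 3]` is
`x * star x = a² + 6b² - 3c² - 18d²`, and `x` is invertible as soon as this norm is nonzero,
with inverse `star x / (x * star x)`. So it suffices that the norm form is anisotropic over `ℚ`.
After clearing denominators this is a 3-adic descent: reducing `a² + 6b² = 3c² + 18d²`
modulo 3, and using that 2 is not a square modulo 3, forces all of `a, b, c, d` to be divisible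
by 3, and the quotients solve the same equation. Hence every coordinate of an integer solution
is divisible by every power of 3, i.e. is zero.
-/

open Quaternion

namespace QuaternionAlgebra

variable {R : Type*} [Field R] {c₁ c₂ c₃ : R}

theorem isUnit_of_re_mul_star_ne_zero {x : ℍ[R,c₁,c₂,c₃]} (hx : (x * star x).re ≠ 0) :
    IsUnit x := by
  set n := (x * star x).re
  have hxn : x * star x = n := mul_star_eq_coe x
  have right : x * (n⁻¹ • star x) = 1 := by
    rw [mul_smul_comm, hxn, smul_coe, inv_mul_cancel₀ hx, coe_one]
  have left : (n⁻¹ • star x) * x = 1 := by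
    rw [smul_mul_assoc, star_comm_self', hxn, smul_coe, inv_mul_cancel₀ hx, coe_one]
  exact isUnit_iff_exists.mpr ⟨_, right, left⟩

theorem re_mul_star_eq (x : ℍ[R,c₁,c₃]) :
    (x * star x).re = x.re ^ 2 - c₁ * x.imI ^ 2 - c₃ * x.imJ ^ 2 + c₁ * c₃ * x.imK ^ 2 := by
  simp only [re_mul, re_star, imI_star, imJ_star, imK_star, zero_mul, add_zero]
  ring

end QuaternionAlgebra

theorem ZMod.eq_zero_of_sq_eq_two_mul_sq_three {x y : ZMod 3} (h : x ^ 2 = 2 * y ^ 2) :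
    x = 0 ∧ y = 0 := by
  revert x y h
  decide

theorem Int.three_dvd_of_three_dvd_sq_sub_two_mul_sq_s2 {x y : ℤ} (h : 3 ∣ x ^ 2 - 2 * y ^ 2) :
    3 ∣ x ∧ 3 ∣ y := by
  have hmod : (x : ZMod 3) ^ 2 = 2 * (y : ZMod 3) ^ 2 := by
    have := (ZMod.intCast_zmod_eq_zero_iff_dvd _ 3).2 h
    push_cast at this
    exact sub_eq_zero.mp this
  obtain ⟨hx, hy⟩ := ZMod.eq_zero_of_sq_eq_two_mul_sq_three hmod
  exact ⟨(ZMod.intCast_zmod_eq_zero_iff_dvd _ 3).1 hx,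
    (ZMod.intCast_zmod_eq_zero_iff_dvd _ 3).1 hy⟩

theorem Int.exists_three_mul_of_sq_add_six_mul_sq_eq {a b c d : ℤ}
    (h : a ^ 2 + 6 * b ^ 2 = 3 * c ^ 2 + 18 * d ^ 2) :
    ∃ a' b' c' d' : ℤ, a = 3 * a' ∧ b = 3 * b' ∧ c = 3 * c' ∧ d = 3 * d' ∧
      a' ^ 2 + 6 * b' ^ 2 = 3 * c' ^ 2 + 18 * d' ^ 2 := by
  obtain ⟨a', rfl⟩ : 3 ∣ a :=
    Int.prime_three.dvd_of_dvd_pow (n := 2) ⟨c ^ 2 + 6 * d ^ 2 - 2 * b ^ 2, by linarith⟩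
  obtain ⟨⟨c', rfl⟩, ⟨b', rfl⟩⟩ :=
    Int.three_dvd_of_three_dvd_sq_sub_two_mul_sq_s2 (x := c) (y := b)
      ⟨a' ^ 2 - 2 * d ^ 2, by linarith⟩
  obtain ⟨⟨a'', rfl⟩, ⟨d', rfl⟩⟩ :=
    Int.three_dvd_of_three_dvd_sq_sub_two_mul_sq_s2 (x := a') (y := d)
      ⟨c' ^ 2 - 2 * b' ^ 2, by linarith⟩
  exact ⟨3 * a'', b', c', d', rfl, rfl, rfl, rfl, by linarith⟩

theorem Int.pow_three_dvd_of_sq_add_six_mul_sq_eq (k : ℕ) {a b c d : ℤ}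
    (h : a ^ 2 + 6 * b ^ 2 = 3 * c ^ 2 + 18 * d ^ 2) :
    3 ^ k ∣ a ∧ 3 ^ k ∣ b ∧ 3 ^ k ∣ c ∧ 3 ^ k ∣ d := by
  induction k generalizing a b c d with
  | zero => simp
  | succ k ih =>
    obtain ⟨a', b', c', d', rfl, rfl, rfl, rfl, h'⟩ :=
      exists_three_mul_of_sq_add_six_mul_sq_eq h
    obtain ⟨ha, hb, hc, hd⟩ := ih h'
    simp only [pow_succ']
    exact ⟨mul_dvd_mul_left 3 ha, mul_dvd_mul_left 3 hb, mul_dvd_mul_left 3 hc,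
      mul_dvd_mul_left 3 hd⟩

theorem Int.eq_zero_of_forall_pow_three_dvd {a : ℤ} (h : ∀ k : ℕ, 3 ^ k ∣ a) : a = 0 := by
  by_contra ha
  obtain ⟨k, hk⟩ := (Int.finiteMultiplicity_iff (a := 3)).mpr ⟨by decide, ha⟩
  exact hk (h (k + 1))

theorem Int.eq_zero_of_sq_add_six_mul_sq_eq {a b c d : ℤ}
    (h : a ^ 2 + 6 * b ^ 2 = 3 * c ^ 2 + 18 * d ^ 2) :
    a = 0 ∧ b = 0 ∧ c = 0 ∧ d = 0 :=
  ⟨eq_zero_of_forall_pow_three_dvd fun k => (pow_three_dvd_of_sq_add_six_mul_sq_eq k h).1,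
    eq_zero_of_forall_pow_three_dvd fun k => (pow_three_dvd_of_sq_add_six_mul_sq_eq k h).2.1,
    eq_zero_of_forall_pow_three_dvd fun k => (pow_three_dvd_of_sq_add_six_mul_sq_eq k h).2.2.1,
    eq_zero_of_forall_pow_three_dvd fun k => (pow_three_dvd_of_sq_add_six_mul_sq_eq k h).2.2.2⟩

theorem Rat.exists_mul_eq_intCast_of_den_dvd {q : ℚ} {n : ℕ} (h : q.den ∣ n) :
    ∃ z : ℤ, q * n = z := by
  obtain ⟨m, rfl⟩ := h
  exact ⟨q.num * m, by push_cast; rw [← mul_assoc, Rat.mul_den_eq_num]⟩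

theorem Rat.eq_zero_of_sq_add_six_mul_sq_eq {a b c d : ℚ}
    (h : a ^ 2 + 6 * b ^ 2 = 3 * c ^ 2 + 18 * d ^ 2) :
    a = 0 ∧ b = 0 ∧ c = 0 ∧ d = 0 := by
  set D : ℕ := a.den * b.den * c.den * d.den
  have hD : (D : ℚ) ≠ 0 := by positivity
  obtain ⟨A, hA⟩ :=
    exists_mul_eq_intCast_of_den_dvd (q := a) (n := D) ⟨b.den * c.den * d.den, by ring⟩
  obtain ⟨B, hB⟩ :=
    exists_mul_eq_intCast_of_den_dvd (q := b) (n := D) ⟨a.den * c.den * d.den, by ring⟩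
  obtain ⟨C, hC⟩ :=
    exists_mul_eq_intCast_of_den_dvd (q := c) (n := D) ⟨a.den * b.den * d.den, by ring⟩
  obtain ⟨E, hE⟩ :=
    exists_mul_eq_intCast_of_den_dvd (q := d) (n := D) ⟨a.den * b.den * c.den, by ring⟩
  have hint : A ^ 2 + 6 * B ^ 2 = 3 * C ^ 2 + 18 * E ^ 2 := by
    have : (A : ℚ) ^ 2 + 6 * B ^ 2 = 3 * C ^ 2 + 18 * E ^ 2 := by
      rw [← hA, ← hB, ← hC, ← hE]
      linear_combination (D : ℚ) ^ 2 * h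
    exact_mod_cast this
  obtain ⟨rfl, rfl, rfl, rfl⟩ := Int.eq_zero_of_sq_add_six_mul_sq_eq hint
  simp only [Int.cast_zero, mul_eq_zero, hD, or_false] at hA hB hC hE
  exact ⟨hA, hB, hC, hE⟩

/-- The rational quaternion algebra `(−6, 3 / ℚ)` is a division ring:
every nonzero element is invertible. -/
theorem stmt_2 : ∀ x : ℍ[ℚ, -6, 3], x ≠ 0 → ∃ y : ℍ[ℚ, -6, 3], x * y = 1 ∧ y * x = 1 := by
  intro x hx
  refine isUnit_iff_exists.mp (QuaternionAlgebra.isUnit_of_re_mul_star_ne_zero fun hnorm => hx ?_)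
  rw [QuaternionAlgebra.re_mul_star_eq] at hnorm
  obtain ⟨hre, himI, himJ, himK⟩ :=
    Rat.eq_zero_of_sq_add_six_mul_sq_eq (a := x.re) (b := x.imI) (c := x.imJ) (d := x.imK)
      (by linear_combination hnorm)
  exact QuaternionAlgebra.ext hre himI himJ himK
end

section
/- The quaternion algebra ℍ[ℚ₂, −6, 2] over the field ℚ₂ of 2-adic numbers, with i² = −6, j² = 2, ij = −ji, is a division ring. -/
/-!
For `x = a + bi + cj + dk` the product `x * star x` is the scalar
`N(x) = a² + 6b² - 2c² - 12d²`, so `x` is invertible as soon as `N(x) ≠ 0`; it remains to see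
that `N` has no nontrivial zero over `ℚ₂`. Dividing a zero by its coordinate of largest norm
gives an integral zero with a unit coordinate. But over `ℤ₂` a zero forces `a = 2a'`, and then
`2a'² + 3b² - c² - 6d² = 0`; reading this modulo 8 forces `b` even, hence `c` even, and
`a'² + 6b'² - 2c'² - 3d² = 0` modulo 8 forces `d` even as well.
-/

open Quaternion

namespace QuaternionAlgebra

theorem re_self_mul_star {R : Type*} [CommRing R] {c₁ c₃ : R} (x : ℍ[R, c₁, c₃]) :
    (x * star x).re = x.re ^ 2 - c₁ * x.imI ^ 2 - c₃ * x.imJ ^ 2 + c₁ * c₃ * x.imK ^ 2 := by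
  simp only [re_mul, re_star, imI_star, imJ_star, imK_star]
  ring

theorem isUnit_of_re_self_mul_star_ne_zero {F : Type*} [Field F] {c₁ c₂ c₃ : F}
    {x : ℍ[F, c₁, c₂, c₃]} (h : (x * star x).re ≠ 0) : IsUnit x := by
  set n := (x * star x).re
  refine ⟨⟨x, ↑n⁻¹ * star x, ?_, ?_⟩, rfl⟩
  · rw [coe_commutes, ← mul_assoc, mul_star_eq_coe, ← coe_mul, mul_inv_cancel₀ h, coe_one]
  · rw [mul_assoc, star_comm_self', mul_star_eq_coe, ← coe_mul, inv_mul_cancel₀ h, coe_one]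

end QuaternionAlgebra

def normFormNegSixTwo {R : Type*} [CommRing R] (v : Fin 4 → R) : R :=
  v 0 ^ 2 + 6 * v 1 ^ 2 - 2 * v 2 ^ 2 - 12 * v 3 ^ 2

theorem QuaternionAlgebra.re_self_mul_star_eq_normFormNegSixTwo {R : Type*} [CommRing R]
    (x : ℍ[R, -6, 2]) : (x * star x).re = normFormNegSixTwo (linearEquivTuple _ _ _ x) := by
  rw [re_self_mul_star]
  simp only [normFormNegSixTwo, coe_linearEquivTuple, equivTuple_apply, Matrix.cons_val]
  ring

namespace PadicInt

theorem dvd_of_not_isUnit_toZModPow {p : ℕ} [Fact p.Prime] {n : ℕ} {x : ℤ_[p]}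
    (h : ¬IsUnit (toZModPow n x)) : (p : ℤ_[p]) ∣ x := by
  rw [← norm_lt_one_iff_dvd, ← not_isUnit_iff]
  exact fun hx => h (hx.map _)

theorem two_dvd_of_normFormNegSixTwo_eq_zero {w : Fin 4 → ℤ_[2]} (h : normFormNegSixTwo w = 0) :
    ∀ i, 2 ∣ w i := by
  have two_prime : Prime (2 : ℤ_[2]) := by exact_mod_cast prime_p (p := 2)
  have hdvd (x : ℤ_[2]) (hx : ¬IsUnit (toZModPow 3 x)) : 2 ∣ x := by
    exact_mod_cast dvd_of_not_isUnit_toZModPow hx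
  have mod_eight₁ : ∀ a b c d : ZMod (2 ^ 3),
      2 * a ^ 2 + 3 * b ^ 2 - c ^ 2 - 6 * d ^ 2 = 0 → ¬IsUnit b := by decide
  have mod_eight₂ : ∀ a b c d : ZMod (2 ^ 3),
      a ^ 2 + 6 * b ^ 2 - 2 * c ^ 2 - 3 * d ^ 2 = 0 → ¬IsUnit d := by decide
  suffices 2 ∣ w 0 ∧ 2 ∣ w 1 ∧ 2 ∣ w 2 ∧ 2 ∣ w 3 by
    intro i; fin_cases i <;> simp [this]
  unfold normFormNegSixTwo at h
  generalize w 0 = a, w 1 = b, w 2 = c, w 3 = d at h ⊢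
  obtain ⟨a, rfl⟩ : 2 ∣ a :=
    two_prime.dvd_of_dvd_pow (n := 2) ⟨c ^ 2 + 6 * d ^ 2 - 3 * b ^ 2, by linear_combination h⟩
  have h₁ : 2 * a ^ 2 + 3 * b ^ 2 - c ^ 2 - 6 * d ^ 2 = 0 :=
    mul_left_cancel₀ two_prime.ne_zero (by linear_combination h)
  obtain ⟨b, rfl⟩ : 2 ∣ b :=
    hdvd _ <| mod_eight₁ (toZModPow 3 a) _ (toZModPow 3 c) (toZModPow 3 d) <| by
      simpa only [map_add, map_sub, map_mul, map_pow, map_ofNat, map_zero]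
        using congrArg (toZModPow 3) h₁
  obtain ⟨c, rfl⟩ : 2 ∣ c :=
    two_prime.dvd_of_dvd_pow (n := 2) ⟨a ^ 2 + 6 * b ^ 2 - 3 * d ^ 2, by linear_combination -h₁⟩
  have h₂ : a ^ 2 + 6 * b ^ 2 - 2 * c ^ 2 - 3 * d ^ 2 = 0 :=
    mul_left_cancel₀ two_prime.ne_zero (by linear_combination h₁)
  have hd : 2 ∣ d :=
    hdvd _ <| mod_eight₂ (toZModPow 3 a) (toZModPow 3 b) (toZModPow 3 c) _ <| by
      simpa only [map_add, map_sub, map_mul, map_pow, map_ofNat, map_zero]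
        using congrArg (toZModPow 3) h₂
  exact ⟨dvd_mul_right _ _, dvd_mul_right _ _, dvd_mul_right _ _, hd⟩

end PadicInt

namespace Padic

theorem norm_lt_one_of_normFormNegSixTwo_eq_zero {v : Fin 4 → ℚ_[2]}
    (h : normFormNegSixTwo v = 0) (hv : ∀ i, ‖v i‖ ≤ 1) (i : Fin 4) : ‖v i‖ < 1 := by
  let w : Fin 4 → ℤ_[2] := fun i => ⟨v i, hv i⟩
  have hw : normFormNegSixTwo w = 0 := by
    apply Subtype.ext
    push_cast [normFormNegSixTwo, w]
    exact h
  exact (PadicInt.norm_lt_one_iff_dvd (w i)).2 <| by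
    exact_mod_cast PadicInt.two_dvd_of_normFormNegSixTwo_eq_zero hw i

theorem norm_lt_of_normFormNegSixTwo_eq_zero {v : Fin 4 → ℚ_[2]}
    (h : normFormNegSixTwo v = 0) {t : ℚ_[2]} (ht : t ≠ 0) (hv : ∀ i, ‖v i‖ ≤ ‖t‖)
    (i : Fin 4) : ‖v i‖ < ‖t‖ := by
  have hscaled : normFormNegSixTwo (t⁻¹ • v) = 0 := by
    unfold normFormNegSixTwo at h ⊢
    simp only [Pi.smul_apply, smul_eq_mul]
    linear_combination t⁻¹ ^ 2 * h
  have ht' : 0 < ‖t‖ := norm_pos_iff.2 ht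
  have := norm_lt_one_of_normFormNegSixTwo_eq_zero hscaled
    (fun j => by simpa [norm_mul, inv_mul_le_iff₀ ht'] using hv j) i
  simpa [norm_mul, inv_mul_lt_iff₀ ht'] using this

theorem eq_zero_of_normFormNegSixTwo_eq_zero {v : Fin 4 → ℚ_[2]}
    (h : normFormNegSixTwo v = 0) : v = 0 := by
  obtain ⟨i, hi⟩ := Finite.exists_max fun i => ‖v i‖
  by_cases hvi : v i = 0
  · funext j
    simpa [hvi] using hi j
  · exact absurd (norm_lt_of_normFormNegSixTwo_eq_zero h hvi hi i) (lt_irrefl _)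

end Padic

/-- The quaternion algebra `(−6, 2 / ℚ₂)` over the 2-adic numbers is a division ring:
every nonzero element is invertible. -/
theorem stmt_5 :
    ∀ x : ℍ[ℚ_[2], -6, 2], x ≠ 0 → ∃ y : ℍ[ℚ_[2], -6, 2], x * y = 1 ∧ y * x = 1 := by
  intro x hx
  have hnorm : (x * star x).re ≠ 0 := by
    rw [QuaternionAlgebra.re_self_mul_star_eq_normFormNegSixTwo]
    exact fun h => hx <| (LinearEquiv.map_eq_zero_iff _).1
      (Padic.eq_zero_of_normFormNegSixTwo_eq_zero h)
  obtain ⟨u, rfl⟩ := QuaternionAlgebra.isUnit_of_re_self_mul_star_ne_zero hnorm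
  exact ⟨↑u⁻¹, u.mul_inv, u.inv_mul⟩
end

section
/- The quaternion algebra ℍ[ℚ₃, −6, 2] over the field ℚ₃ of 3-adic numbers, with i² = −6, j² = 2, ij = −ji, is a division ring. -/
open Quaternion

/-! The reduced norm of `a = r + x i + y j + z k` is `(r² - 2y²) + 6 (x² - 2z²)`. Since `2` is
not a square modulo `3`, `‖u² - 2v²‖ = max(‖u‖, ‖v‖)²` on `ℚ₃`, a norm of even valuation, while `6`
has valuation one. So the two summands cannot cancel unless both vanish: the reduced norm is
anisotropic, and `a⁻¹ = N(a)⁻¹ ā`. -/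

namespace QuaternionAlgebra

theorem re_mul_star {R : Type*} [CommRing R] {c₁ c₂ : R} (a : ℍ[R,c₁,c₂]) :
    (a * star a).re = a.re ^ 2 - c₁ * a.imI ^ 2 - c₂ * a.imJ ^ 2 + c₁ * c₂ * a.imK ^ 2 := by
  simp only [re_mul, re_star, imI_star, imJ_star, imK_star]
  ring

theorem exists_mul_eq_one_of_re_mul_star_ne_zero {K : Type*} [Field K] {c₁ c₂ c₃ : K}
    (a : ℍ[K,c₁,c₂,c₃]) (ha : (a * star a).re ≠ 0) :
    ∃ b : ℍ[K,c₁,c₂,c₃], a * b = 1 ∧ b * a = 1 := by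
  set N := (a * star a).re
  have hN : a * star a = N := mul_star_eq_coe a
  refine ⟨N⁻¹ • star a, ?_, ?_⟩
  · rw [mul_smul_comm, hN, smul_coe, inv_mul_cancel₀ ha, coe_one]
  · rw [smul_mul_assoc, star_comm_self', hN, smul_coe, inv_mul_cancel₀ ha, coe_one]

end QuaternionAlgebra

section

variable {p : ℕ} [Fact p.Prime] {d : ℤ}

theorem PadicInt.norm_sq_sub_intCast_eq_one (hd : ¬IsSquare (d : ZMod p)) (z : ℤ_[p]) :
    ‖z ^ 2 - d‖ = 1 := by
  refine le_antisymm (norm_le_one _) (not_lt.1 fun h => hd ⟨toZMod z, ?_⟩)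
  have hker : z ^ 2 - d ∈ RingHom.ker (toZMod : ℤ_[p] →+* ZMod p) := by
    rw [ker_toZMod, maximalIdeal_eq_span_p, Ideal.mem_span_singleton]
    exact (norm_lt_one_iff_dvd _).1 h
  rw [RingHom.mem_ker, map_sub, map_pow, map_intCast, sub_eq_zero] at hker
  rw [← hker, sq]

namespace Padic

theorem norm_sq_sub_intCast_eq_one (hd : ¬IsSquare (d : ZMod p)) {t : ℚ_[p]} (ht : ‖t‖ ≤ 1) :
    ‖t ^ 2 - d‖ = 1 :=
  PadicInt.norm_sq_sub_intCast_eq_one hd ⟨t, ht⟩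

theorem norm_intCast_eq_one_of_not_isSquare (hd : ¬IsSquare (d : ZMod p)) :
    ‖(d : ℚ_[p])‖ = 1 := by
  simpa using norm_sq_sub_intCast_eq_one hd (t := 0) (by simp)

theorem norm_sq_sub_mul_sq (hd : ¬IsSquare (d : ZMod p)) (u v : ℚ_[p]) :
    ‖u ^ 2 - d * v ^ 2‖ = max ‖u‖ ‖v‖ ^ 2 := by
  have hnd := norm_intCast_eq_one_of_not_isSquare hd
  rcases eq_or_ne ‖u‖ ‖v‖ with h | h
  · rcases eq_or_ne v 0 with rfl | hv
    · simp_all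
    have hle : ‖u / v‖ ≤ 1 := by rw [norm_div, h, div_self (norm_ne_zero_iff.mpr hv)]
    have hfactor : u ^ 2 - d * v ^ 2 = v ^ 2 * ((u / v) ^ 2 - d) := by field_simp
    rw [hfactor, norm_mul, norm_pow, norm_sq_sub_intCast_eq_one hd hle, mul_one, h, max_self]
  · have hne : ‖u ^ 2‖ ≠ ‖-(d * v ^ 2)‖ := by
      rw [norm_neg, norm_mul, norm_pow, norm_pow, hnd, one_mul]
      exact fun hsq => h ((pow_left_inj₀ (norm_nonneg u) (norm_nonneg v) two_ne_zero).1 hsq)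
    rw [sub_eq_add_neg, add_eq_max_of_ne hne, norm_neg, norm_mul, norm_pow, norm_pow, hnd, one_mul]
    rcases le_total ‖u‖ ‖v‖ with hle | hle <;> simp [hle, pow_le_pow_left₀ (norm_nonneg _) hle]

theorem norm_sq_ne_inv_prime (x : ℚ_[p]) : ‖x‖ ^ 2 ≠ (p : ℝ)⁻¹ := by
  have hp : (1 : ℝ) < p := mod_cast (Fact.out : p.Prime).one_lt
  rcases eq_or_ne x 0 with rfl | hx
  · simp [(zero_lt_one.trans hp).ne]
  rw [norm_eq_zpow_neg_valuation hx, ← zpow_natCast, ← zpow_mul, ← zpow_neg_one]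
  intro h
  have := zpow_right_injective₀ (by positivity) hp.ne' h
  omega

theorem eq_zero_of_sq_sub_mul_sq_add_mul_eq_zero (hd : ¬IsSquare (d : ZMod p)) {c : ℚ_[p]}
    (hc : ‖c‖ = (p : ℝ)⁻¹) {u v w z : ℚ_[p]}
    (h : u ^ 2 - d * v ^ 2 + c * (w ^ 2 - d * z ^ 2) = 0) :
    u = 0 ∧ v = 0 ∧ w = 0 ∧ z = 0 := by
  have hnorm : max ‖u‖ ‖v‖ ^ 2 = (p : ℝ)⁻¹ * max ‖w‖ ‖z‖ ^ 2 := by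
    rw [← norm_sq_sub_mul_sq hd, ← norm_sq_sub_mul_sq hd, ← hc, ← norm_mul,
      eq_neg_of_add_eq_zero_left h, norm_neg]
  have hmax (a b : ℚ_[p]) : ∃ s : ℚ_[p], ‖s‖ = max ‖a‖ ‖b‖ :=
    (max_choice ‖a‖ ‖b‖).elim (fun h => ⟨a, h.symm⟩) (fun h => ⟨b, h.symm⟩)
  have hwz : max ‖w‖ ‖z‖ = 0 := by
    by_contra hne
    obtain ⟨s, hs⟩ := hmax u v
    obtain ⟨t, ht⟩ := hmax w z
    apply norm_sq_ne_inv_prime (s / t)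
    rw [norm_div, div_pow, hs, ht, hnorm]
    field_simp
  have huv : max ‖u‖ ‖v‖ = 0 := by simpa [hwz] using hnorm
  exact ⟨norm_le_zero_iff.1 (huv ▸ le_max_left _ _), norm_le_zero_iff.1 (huv ▸ le_max_right _ _),
    norm_le_zero_iff.1 (hwz ▸ le_max_left _ _), norm_le_zero_iff.1 (hwz ▸ le_max_right _ _)⟩

end Padic

end

/-- The quaternion algebra `(−6, 2 / ℚ₃)` over the 3-adic numbers is a division ring:
every nonzero element is invertible. -/
theorem stmt_6 :
    ∀ x : ℍ[ℚ_[3], -6, 2], x ≠ 0 → ∃ y : ℍ[ℚ_[3], -6, 2], x * y = 1 ∧ y * x = 1 := by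
  intro x hx
  refine x.exists_mul_eq_one_of_re_mul_star_ne_zero fun h => hx ?_
  have hd : ¬IsSquare ((2 : ℤ) : ZMod 3) := by decide
  have h6 : ‖(6 : ℚ_[3])‖ = (3 : ℝ)⁻¹ := by
    rw [show (6 : ℚ_[3]) = ((2 : ℤ) : ℚ_[3]) * 3 by norm_num, norm_mul,
      Padic.norm_intCast_eq_one_of_not_isSquare hd, one_mul]
    exact_mod_cast Padic.norm_p (p := 3)
  rw [QuaternionAlgebra.re_mul_star] at h
  obtain ⟨hre, hJ, hI, hK⟩ := Padic.eq_zero_of_sq_sub_mul_sq_add_mul_eq_zero hd h6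
    (u := x.re) (v := x.imJ) (w := x.imI) (z := x.imK) (by push_cast; linear_combination h)
  exact QuaternionAlgebra.ext hre hI hJ hK
end

section
/- For each m ∈ {2, 3, −6}, there exists a ℚ-algebra homomorphism from the field ℚ[X]/(X² − m) (Mathlib's AdjoinRoot of the polynomial X² − m over ℚ) into the quaternion algebra ℍ[ℚ, −6, 2]; equivalently, there exists an element x of ℍ[ℚ, −6, 2] with x² = m and x not in the image of the structure map from ℚ. -/
/-!
In `ℍ[ℚ, -6, 2]` the basis elements satisfy `i² = -6`, `j² = 2` and `k² = -(-6 · 2) = 12`,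
so `j`, `k / 2` and `i` are non-scalar square roots of `2`, `3` and `-6`. A root of a polynomial
in any `ℚ`-algebra, commutative or not, induces an algebra map out of `AdjoinRoot`.
-/

open Quaternion Polynomial

/-- Unlike `AdjoinRoot.liftAlgHom`, this does not need the target to be commutative. -/
theorem AdjoinRoot.nonempty_algHom_of_aeval_eq_zero {R A : Type*} [CommRing R] [Ring A]
    [Algebra R A] {p : R[X]} {x : A} (hx : aeval x p = 0) :
    Nonempty (AdjoinRoot p →ₐ[R] A) :=
  ⟨Ideal.Quotient.liftₐ (Ideal.span {p}) (aeval x) fun q hq => by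
    obtain ⟨r, rfl⟩ := Ideal.mem_span_singleton.mp hq
    rw [map_mul, hx, zero_mul]⟩

namespace QuaternionAlgebra

variable {R : Type*} [CommRing R]

theorem notMem_range_algebraMap_of_im_ne_zero {c₁ c₂ c₃ : R} {x : ℍ[R,c₁,c₂,c₃]}
    (hx : x.im ≠ 0) : x ∉ Set.range (algebraMap R ℍ[R,c₁,c₂,c₃]) := by
  rintro ⟨r, rfl⟩
  exact hx (im_coe r)

variable {a b : R}

theorem i_sq : (Basis.self R : Basis ℍ[R,a,b] a 0 b).i ^ 2 = algebraMap R ℍ[R,a,b] a := by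
  rw [sq, Basis.i_mul_i, zero_smul, add_zero, Algebra.algebraMap_eq_smul_one]

theorem j_sq : (Basis.self R : Basis ℍ[R,a,b] a 0 b).j ^ 2 = algebraMap R ℍ[R,a,b] b := by
  rw [sq, Basis.j_mul_j, Algebra.algebraMap_eq_smul_one]

theorem k_sq :
    (Basis.self R : Basis ℍ[R,a,b] a 0 b).k ^ 2 = algebraMap R ℍ[R,a,b] (-(a * b)) := by
  rw [sq, Basis.k_mul_k, Algebra.algebraMap_eq_smul_one, neg_smul]

end QuaternionAlgebra

open QuaternionAlgebra in
/-- For each `m ∈ {2, 3, −6}`, the quadratic field `ℚ[X]/(X² − m)` embeds into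
the quaternion algebra `(−6, 2 / ℚ)`; equivalently, `ℍ[ℚ, −6, 2]` contains an
element `x` with `x² = m` which is not a scalar. -/
theorem stmt_9 : ∀ m ∈ ({2, 3, -6} : Set ℚ),
    Nonempty (AdjoinRoot (X ^ 2 - C m) →ₐ[ℚ] ℍ[ℚ, -6, 2]) ∧
      ∃ x : ℍ[ℚ, -6, 2], x ^ 2 = algebraMap ℚ ℍ[ℚ, -6, 2] m ∧
        x ∉ Set.range (algebraMap ℚ ℍ[ℚ, -6, 2]) := by
  have of_sq_eq {m : ℚ} (x : ℍ[ℚ, -6, 2]) (hx : x ^ 2 = algebraMap ℚ _ m) (him : x.im ≠ 0) :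
      Nonempty (AdjoinRoot (X ^ 2 - C m) →ₐ[ℚ] ℍ[ℚ, -6, 2]) ∧
        ∃ x : ℍ[ℚ, -6, 2], x ^ 2 = algebraMap ℚ ℍ[ℚ, -6, 2] m ∧
          x ∉ Set.range (algebraMap ℚ ℍ[ℚ, -6, 2]) :=
    ⟨AdjoinRoot.nonempty_algHom_of_aeval_eq_zero (x := x) (by simp [hx]), x, hx,
      notMem_range_algebraMap_of_im_ne_zero him⟩
  let q : Basis ℍ[ℚ, -6, 2] _ _ _ := Basis.self ℚ
  rintro m (rfl | rfl | rfl)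
  · exact of_sq_eq q.j j_sq (by simp [q, QuaternionAlgebra.ext_iff])
  · refine of_sq_eq ((2⁻¹ : ℚ) • q.k) ?_ (by simp [q, QuaternionAlgebra.ext_iff])
    rw [_root_.smul_pow, k_sq, Algebra.algebraMap_eq_smul_one, Algebra.algebraMap_eq_smul_one,
      smul_smul]
    norm_num
  · exact of_sq_eq q.i i_sq (by simp [q, QuaternionAlgebra.ext_iff])
end
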